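/- arXiv:1806.08944 — 4 statements merged into one kernel-verified Lean document; each statement's English description precedes it below -/
import Mathlib

section
/- For an odd prime q, the energy of the line graph of the zero-divisor graph of Z_{2q} equals 2q - 4, i.e., the sum of absolute values of the eigenvalues of the adjacency matrix of L(Γ(Z_{2q})) is 2q - 4. -/
open Polynomial SimpleGraph

/-- The zero-divisor graph of `ZMod n`: vertices are the nonzero zero-divisors,
adjacency is `x * y = 0` (for distinct vertices). -/
def zdGraph (n : ℕ) :
    SimpleGraph {x : ZMod n // x ≠ 0 ∧ ∃ y : ZMod n, y ≠ 0 ∧ x * y = 0} where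
  Adj a b := a ≠ b ∧ (a : ZMod n) * b = 0
  symm := ⟨fun a b h => ⟨h.1.symm, by rw [mul_comm]; exact h.2⟩⟩
  loopless := ⟨fun a h => h.1 rfl⟩

/-- The energy of a graph: the sum of the absolute values of the eigenvalues
(roots of the characteristic polynomial, with multiplicity) of its adjacency matrix. -/
noncomputable def energy {V : Type*} [Fintype V] [DecidableEq V] (G : SimpleGraph V)
    [DecidableRel G.Adj] : ℝ :=
  (((G.adjMatrix ℝ).charpoly).roots.map (fun x => |x|)).sum

/-- The Wiener index of a graph: half the sum of distances over all ordered pairs. -/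
noncomputable def wienerIndex {V : Type*} (G : SimpleGraph V) : ℕ :=
  (∑ᶠ p : V × V, G.dist p.1 p.2) / 2

/-!
The zero-divisor graph of `ℤ/2q` is a star centred at `q`: if `xy = 0` in `ℤ/2q` with `x, y ≠ 0`,
the prime `q` divides one of them, which is then `q` itself; conversely every other zero-divisor
kills `q`. Its vertices are the `2q - φ(2q) - 1 = q` nonzero non-units, so it has `q - 1` edges,
and any two edges meet at the centre: the line graph is `K_{q-1}`. The adjacency matrix of `K_n`
is `J - I`, whose characteristic polynomial `(X + 1)^(n-1) (X - (n - 1))` gives energy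
`2(n - 1) = 2q - 4`.
-/

theorem exists_ne_zero_mul_eq_zero_iff_not_isUnit {R : Type*} [CommRing R] [Finite R] {x : R} :
    (∃ y, y ≠ 0 ∧ x * y = 0) ↔ ¬IsUnit x := by
  rw [isUnit_iff_mem_nonZeroDivisors_of_finite, notMem_nonZeroDivisors_iff_left]
  simp only [Set.Nonempty, Set.mem_ofPred_eq, and_comm]

theorem card_nonzero_zeroDivisors_add_card_units_add_one {R : Type*} [CommRing R] [Finite R]
    [Nontrivial R] :
    Nat.card {x : R // x ≠ 0 ∧ ∃ y, y ≠ 0 ∧ x * y = 0} + Nat.card Rˣ + 1 = Nat.card R := by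
  set U := Set.range ((↑) : Rˣ → R)
  have hzd : {x : R | x ≠ 0 ∧ ∃ y, y ≠ 0 ∧ x * y = 0} = Uᶜ \ {0} := by
    ext x
    simp only [exists_ne_zero_mul_eq_zero_iff_not_isUnit, Set.mem_ofPred_eq, Set.mem_sdiff,
      Set.mem_compl_iff, Set.mem_singleton_iff, U]
    exact and_comm
  have h0 : (0 : R) ∈ Uᶜ := not_isUnit_zero
  have hU : U.ncard = Nat.card Rˣ := Set.ncard_range_of_injective Units.val_injective
  have hcompl := Set.ncard_add_ncard_compl U
  have hpos : 0 < Uᶜ.ncard := (Set.ncard_pos).2 ⟨0, h0⟩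
  change {x : R | x ≠ 0 ∧ ∃ y, y ≠ 0 ∧ x * y = 0}.ncard + _ + 1 = _
  rw [hzd, Set.ncard_sdiff_singleton_of_mem h0]
  omega

namespace SimpleGraph

variable {V : Type*}

theorem mem_of_mem_edgeSet_starGraph {r : V} {e : Sym2 V} (he : e ∈ (starGraph r).edgeSet) :
    r ∈ e := by
  induction e using Sym2.ind with
  | _ u v =>
    rw [mem_edgeSet, starGraph_adj] at he
    exact Sym2.mem_iff.2 (he.2.imp Eq.symm Eq.symm)

theorem lineGraph_starGraph (r : V) : (starGraph r).lineGraph = ⊤ := by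
  ext e f
  rw [lineGraph_adj_iff_exists, top_adj]
  exact ⟨And.left, fun hef =>
    ⟨hef, r, mem_of_mem_edgeSet_starGraph e.2, mem_of_mem_edgeSet_starGraph f.2⟩⟩

theorem card_edgeSet_starGraph [Finite V] (r : V) :
    Nat.card (starGraph r).edgeSet = Nat.card V - 1 := by
  classical
  have hinc : (starGraph r).edgeSet = (starGraph r).incidenceSet r :=
    Set.ext fun e => ⟨fun he => ⟨he, mem_of_mem_edgeSet_starGraph he⟩, And.left⟩
  have hnbr : (starGraph r).neighborSet r = {r}ᶜ := by
    ext v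
    simp [neighborSet, eq_comm]
  rw [hinc, Nat.card_congr ((starGraph r).incidenceSetEquivNeighborSet r), hnbr,
    Nat.card_coe_set_eq, Set.ncard_compl, Set.ncard_singleton]

variable [Fintype V] [DecidableEq V]

open Matrix in
theorem charpoly_adjMatrix_top {R : Type*} [CommRing R] [DecidableRel (⊤ : SimpleGraph V).Adj]
    {m : ℕ} (hV : Fintype.card V = m + 1) :
    ((⊤ : SimpleGraph V).adjMatrix R).charpoly = (X + 1) ^ m * (X - C (m : R)) := by
  have hA : (⊤ : SimpleGraph V).adjMatrix R = vecMulVec 1 1 - scalar V (1 : R) := by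
    ext i j
    rcases eq_or_ne i j with rfl | h <;> simp [*]
  rw [hA, charpoly_sub_scalar, charpoly_vecMulVec]
  simp only [hV, one_dotProduct_one, Nat.cast_add, Nat.cast_one, add_tsub_cancel_right,
    smul_eq_C_mul, map_add, map_natCast, map_one, sub_comp, pow_comp, X_comp, mul_comp, add_comp,
    natCast_comp, one_comp]
  ring

/-- Stated for a `G` equal to `⊤` so that it applies with whatever `DecidableRel G.Adj` instance
comes with `G`. -/
theorem energy_eq_of_eq_top {G : SimpleGraph V} [DecidableRel G.Adj] (hG : G = ⊤) {m : ℕ}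
    (hV : Fintype.card V = m + 1) : energy G = 2 * m := by
  subst hG
  have hroots : ((X + 1) ^ m * (X - C (m : ℝ))).roots = m • {-1} + {(m : ℝ)} := by
    rw [← sub_neg_eq_add X, ← C_1, ← C_neg, roots_mul (mul_ne_zero (pow_ne_zero _
      (X_sub_C_ne_zero _)) (X_sub_C_ne_zero _)), roots_pow, roots_X_sub_C, roots_X_sub_C]
  rw [energy, charpoly_adjMatrix_top hV, hroots]
  simp [Multiset.map_nsmul, Multiset.sum_nsmul]
  ring

end SimpleGraph

namespace ZMod

variable {q : ℕ}

theorem natCast_ne_zero_and_exists_mul_eq_zero (hq : q.Prime) :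
    (q : ZMod (2 * q)) ≠ 0 ∧ ∃ y : ZMod (2 * q), y ≠ 0 ∧ (q : ZMod (2 * q)) * y = 0 := by
  have hne : ∀ k, 0 < k → k < 2 * q → (k : ZMod (2 * q)) ≠ 0 := fun k hk hlt h =>
    absurd (Nat.le_of_dvd hk ((natCast_eq_zero_iff _ _).1 h)) (by omega)
  have := hq.two_le
  refine ⟨hne q (by omega) (by omega), 2, ?_, ?_⟩
  · exact_mod_cast hne 2 two_pos (by omega)
  · exact_mod_cast (natCast_eq_zero_iff _ _).2 (by rw [mul_comm])

variable [NeZero (2 * q)]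

theorem eq_natCast_of_dvd_val {x : ZMod (2 * q)} (hx : x ≠ 0) (hdvd : q ∣ x.val) :
    x = q := by
  obtain ⟨k, hk⟩ := hdvd
  have hk0 : k ≠ 0 := by
    rintro rfl
    exact hx ((val_eq_zero x).1 (by simpa using hk))
  have hk1 : k = 1 := by nlinarith [x.val_lt, Nat.pos_of_ne_zero hk0]
  rw [← natCast_zmod_val x, hk, hk1, mul_one]

theorem eq_natCast_or_eq_natCast_of_mul_eq_zero (hq : q.Prime) {x y : ZMod (2 * q)}
    (hx : x ≠ 0) (hy : y ≠ 0) (hxy : x * y = 0) : x = q ∨ y = q := by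
  rw [← natCast_zmod_val x, ← natCast_zmod_val y, ← Nat.cast_mul, natCast_eq_zero_iff] at hxy
  exact (hq.dvd_mul.1 (dvd_of_mul_left_dvd hxy)).imp (eq_natCast_of_dvd_val hx)
    (eq_natCast_of_dvd_val hy)

theorem mul_natCast_eq_zero (hq : q.Prime) {x : ZMod (2 * q)} (hxq : x ≠ q)
    (hx : ∃ y, y ≠ 0 ∧ x * y = 0) : x * q = 0 := by
  obtain ⟨y, hy, hxy⟩ := hx
  rcases eq_or_ne x 0 with rfl | hx0
  · exact zero_mul _
  rcases eq_natCast_or_eq_natCast_of_mul_eq_zero hq hx0 hy hxy with h | h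
  · exact absurd h hxq
  · rwa [h] at hxy

theorem card_units_two_mul (hq : q.Prime) (hodd : Odd q) : Nat.card (ZMod (2 * q))ˣ = q - 1 := by
  rw [Nat.card_eq_fintype_card, card_units_eq_totient,
    Nat.totient_mul (Nat.coprime_two_left.2 hodd), Nat.totient_two, Nat.totient_prime hq, one_mul]

theorem card_nonzero_zeroDivisors_two_mul (hq : q.Prime) (hodd : Odd q) :
    Nat.card {x : ZMod (2 * q) // x ≠ 0 ∧ ∃ y, y ≠ 0 ∧ x * y = 0} = q := by
  have : Fact (1 < 2 * q) := ⟨by have := hq.two_le; omega⟩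
  have hcard := card_nonzero_zeroDivisors_add_card_units_add_one (R := ZMod (2 * q))
  rw [card_units_two_mul hq hodd, Nat.card_zmod] at hcard
  have := hq.two_le
  omega

end ZMod

open ZMod in
theorem zdGraph_two_mul_eq_starGraph {q : ℕ} [NeZero (2 * q)] (hq : q.Prime) :
    zdGraph (2 * q) = starGraph ⟨q, natCast_ne_zero_and_exists_mul_eq_zero hq⟩ := by
  ext u v
  rw [starGraph_adj]
  constructor
  · rintro ⟨huv, h⟩
    exact ⟨huv, (eq_natCast_or_eq_natCast_of_mul_eq_zero hq u.2.1 v.2.1 h).imp Subtype.ext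
      Subtype.ext⟩
  · rintro ⟨huv, rfl | rfl⟩
    · exact ⟨huv, (mul_comm _ _).trans
        (mul_natCast_eq_zero hq (fun h => huv (Subtype.ext h.symm)) v.2.2)⟩
    · exact ⟨huv, mul_natCast_eq_zero hq (fun h => huv (Subtype.ext h)) u.2.2⟩

open scoped Classical in
theorem energy_lineGraph_zdGraph_two_mul_prime
    (q : ℕ) (hq : q.Prime) (hodd : Odd q) [NeZero (2 * q)] :
    energy (zdGraph (2 * q)).lineGraph = 2 * (q : ℝ) - 4 := by
  have hstar := zdGraph_two_mul_eq_starGraph hq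
  have hedges : Fintype.card (zdGraph (2 * q)).edgeSet = (q - 2) + 1 := by
    rw [Fintype.card_eq_nat_card, hstar, card_edgeSet_starGraph,
      ZMod.card_nonzero_zeroDivisors_two_mul hq hodd]
    have := hq.two_le
    omega
  rw [energy_eq_of_eq_top (by rw [hstar]; exact lineGraph_starGraph _) hedges,
    Nat.cast_sub hq.two_le]
  push_cast
  ring
end

section
/- For distinct primes p, q with 2 < p < q, the energy of the line graph of the zero-divisor graph of Z_{pq} equals 4pq - 8p - 8q + 16, i.e., 4(p-2)(q-2). -/
open Polynomial SimpleGraph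

/-!
Via the Chinese remainder theorem `ℤ/pq ≅ 𝔽_p × 𝔽_q`, the nonzero zero divisors are the
elements `(a, 0)` and `(0, b)` with `a, b ≠ 0`, and two of them multiply to zero exactly when
they lie on different sides. So the zero-divisor graph is `K_{p-1,q-1}`, whose line graph is the
rook's graph `K_{p-1} □ K_{q-1}`. The adjacency matrix of `K_m` is diagonalised by an explicit
eigenbasis with eigenvalues `m - 1` (once) and `-1`, and the Kronecker product of the two
eigenbases diagonalises the rook's graph, whose eigenvalues are the pairwise sums. Summing their
absolute values gives `4 (p - 2) (q - 2)`.
-/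

open Matrix Kronecker

namespace Matrix

variable {n R : Type*} [Fintype n] [DecidableEq n]

def IsSimilarToDiagonal [CommRing R] (A : Matrix n n R) (d : n → R) : Prop :=
  ∃ P Q : Matrix n n R, Q * P = 1 ∧ A * P = P * diagonal d

theorem IsSimilarToDiagonal.charpoly_eq [CommRing R] {A : Matrix n n R} {d : n → R}
    (h : A.IsSimilarToDiagonal d) : A.charpoly = ∏ i, (X - C (d i)) := by
  obtain ⟨P, Q, hQP, hAP⟩ := h
  have hA : A = P * diagonal d * Q := by
    rw [← hAP, Matrix.mul_assoc, mul_eq_one_comm.mp hQP, Matrix.mul_one]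
  rw [hA, charpoly_mul_comm, ← Matrix.mul_assoc, hQP, Matrix.one_mul, charpoly_diagonal]

theorem IsSimilarToDiagonal.kroneckerSum [CommRing R] {m : Type*} [Fintype m] [DecidableEq m]
    {A : Matrix n n R} {B : Matrix m m R} {d : n → R} {e : m → R}
    (hA : A.IsSimilarToDiagonal d) (hB : B.IsSimilarToDiagonal e) :
    (A ⊗ₖ 1 + 1 ⊗ₖ B).IsSimilarToDiagonal fun x => d x.1 + e x.2 := by
  obtain ⟨P, Q, hQP, hAP⟩ := hA
  obtain ⟨P', Q', hQP', hBP'⟩ := hB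
  refine ⟨P ⊗ₖ P', Q ⊗ₖ Q', by rw [← mul_kronecker_mul, hQP, hQP', one_kronecker_one], ?_⟩
  have hdiag : diagonal (fun x : n × m => d x.1 + e x.2) = diagonal d ⊗ₖ 1 + 1 ⊗ₖ diagonal e := by
    rw [← diagonal_one, ← diagonal_one, diagonal_kronecker_diagonal, diagonal_kronecker_diagonal,
      diagonal_add]
    simp
  rw [hdiag, Matrix.add_mul, Matrix.mul_add, ← mul_kronecker_mul, ← mul_kronecker_mul,
    ← mul_kronecker_mul, ← mul_kronecker_mul, hAP, hBP']
  simp only [Matrix.one_mul, Matrix.mul_one]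

theorem isSimilarToDiagonal_adjMatrix_top {K : Type*} [Field K] (i₀ : n)
    (hn : (Fintype.card n : K) ≠ 0) :
    ((⊤ : SimpleGraph n).adjMatrix K).IsSimilarToDiagonal
      fun i => if i = i₀ then (Fintype.card n : K) - 1 else -1 := by
  -- Column `i₀` is the all-ones vector, column `j ≠ i₀` is `single j 1 - single i₀ 1`.
  let P : Matrix n n K := .of fun i j =>
    if j = i₀ then 1 else (if i = j then 1 else 0) - (if i = i₀ then 1 else 0)
  have hcol (j : n) : ∑ k, P k j = if j = i₀ then (Fintype.card n : K) else 0 := by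
    by_cases hj : j = i₀ <;> simp [P, hj, Finset.sum_sub_distrib]
  refine ⟨P, .of fun i j =>
    (if i = j ∧ i ≠ i₀ then 1 else 0) + (if i = i₀ then 1 else -1) / Fintype.card n, ?_, ?_⟩
  · ext i j
    simp only [mul_apply, of_apply, add_mul, Finset.sum_add_distrib, ← Finset.mul_sum, hcol]
    by_cases hj : j = i₀ <;> by_cases hi : i = i₀ <;> simp [P, hi, hj, one_apply, hn]
    exact Ne.symm hj
  · have hJ : (⊤ : SimpleGraph n).adjMatrix K = .of (fun _ _ => 1) - 1 := by
      ext i j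
      by_cases h : i = j <;> simp [h]
    ext i j
    rw [hJ, Matrix.sub_mul, Matrix.one_mul, mul_diagonal, sub_apply, mul_apply]
    simp only [of_apply, one_mul, hcol]
    by_cases hj : j = i₀ <;> simp [hj, P]

end Matrix

theorem Fintype.sum_eq_add_card_sub_one_nsmul {ι M : Type*} [Fintype ι] [DecidableEq ι]
    [AddCommMonoid M] {f : ι → M} (i₀ : ι) {c : M} (h : ∀ i ≠ i₀, f i = c) :
    ∑ i, f i = f i₀ + (Fintype.card ι - 1) • c := by
  rw [Fintype.sum_eq_add_sum_compl i₀, Finset.sum_congr rfl fun i hi => h i (by simpa using hi),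
    Finset.sum_const, Finset.card_compl, Finset.card_singleton]

namespace SimpleGraph

theorem adjMatrix_boxProd {α β R : Type*} [DecidableEq α] [DecidableEq β] [Semiring R]
    (G : SimpleGraph α) (H : SimpleGraph β) [DecidableRel G.Adj] [DecidableRel H.Adj]
    [DecidableRel (G □ H).Adj] :
    (G □ H).adjMatrix R = G.adjMatrix R ⊗ₖ 1 + 1 ⊗ₖ H.adjMatrix R := by
  ext ⟨a, b⟩ ⟨a', b'⟩
  by_cases ha : a = a' <;> by_cases hb : b = b' <;> simp [ha, hb]

section Energy

variable {V W : Type*} [Fintype V] [DecidableEq V] [Fintype W] [DecidableEq W]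

theorem Iso.energy_eq {G : SimpleGraph V} {H : SimpleGraph W} [DecidableRel G.Adj]
    [DecidableRel H.Adj] (e : G ≃g H) : energy G = energy H := by
  have hA : H.adjMatrix ℝ = reindex e.toEquiv e.toEquiv (G.adjMatrix ℝ) := by
    ext i j
    exact if_congr e.symm.map_adj_iff.symm rfl rfl
  rw [energy, energy, hA, charpoly_reindex]

theorem energy_eq_sum_abs_of_isSimilarToDiagonal {G : SimpleGraph V} [DecidableRel G.Adj]
    {d : V → ℝ} (h : (G.adjMatrix ℝ).IsSimilarToDiagonal d) : energy G = ∑ v, |d v| := by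
  have hprod : ∏ v, (X - C (d v)) = ((Finset.univ.val.map d).map fun a => X - C a).prod := by
    rw [Multiset.map_map]
    rfl
  rw [energy, h.charpoly_eq, hprod, roots_multiset_prod_X_sub_C, Multiset.map_map]
  rfl

end Energy

theorem energy_top_boxProd_top {ι κ : Type*} [Fintype ι] [DecidableEq ι] [Fintype κ]
    [DecidableEq κ] [DecidableRel ((⊤ : SimpleGraph ι) □ (⊤ : SimpleGraph κ)).Adj]
    (hι : 2 ≤ Fintype.card ι) (hκ : 2 ≤ Fintype.card κ) :
    energy ((⊤ : SimpleGraph ι) □ (⊤ : SimpleGraph κ)) =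
      4 * ((Fintype.card ι : ℝ) - 1) * ((Fintype.card κ : ℝ) - 1) := by
  obtain ⟨i₀⟩ : Nonempty ι := Fintype.card_pos_iff.mp (by omega)
  obtain ⟨k₀⟩ : Nonempty κ := Fintype.card_pos_iff.mp (by omega)
  have hsim := (isSimilarToDiagonal_adjMatrix_top (K := ℝ) i₀ (by positivity)).kroneckerSum
    (isSimilarToDiagonal_adjMatrix_top (K := ℝ) k₀ (by positivity))
  rw [← adjMatrix_boxProd] at hsim
  have hm : (2 : ℝ) ≤ Fintype.card ι := by exact_mod_cast hι
  have hn : (2 : ℝ) ≤ Fintype.card κ := by exact_mod_cast hκ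
  have hrow (a : ℝ) : ∑ k, |a + if k = k₀ then (Fintype.card κ : ℝ) - 1 else -1|
      = |a + (Fintype.card κ - 1)| + (Fintype.card κ - 1) • |a + -1| := by
    rw [Fintype.sum_eq_add_card_sub_one_nsmul k₀ (c := |a + -1|), if_pos rfl]
    intro k hk
    rw [if_neg hk]
  rw [energy_eq_sum_abs_of_isSimilarToDiagonal hsim, Fintype.sum_prod_type,
    Fintype.sum_eq_add_card_sub_one_nsmul i₀
      (c := ∑ k : κ, |-1 + if k = k₀ then (Fintype.card κ : ℝ) - 1 else -1|)]
  swap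
  · intro i hi
    simp only [if_neg hi]
  simp only [↓reduceIte, hrow, nsmul_eq_mul, Nat.cast_sub (by omega : 1 ≤ Fintype.card ι),
    Nat.cast_sub (by omega : 1 ≤ Fintype.card κ), Nat.cast_one]
  rw [abs_of_nonneg (by linarith), abs_of_nonneg (by linarith), abs_of_nonneg (by linarith),
    abs_of_neg (by norm_num)]
  ring

section CompleteBipartite

variable {α β : Type*}

noncomputable def edgeSetCompleteBipartiteGraphEquiv :
    α × β ≃ (completeBipartiteGraph α β).edgeSet :=
  Equiv.ofBijective (fun x => ⟨s(.inl x.1, .inr x.2), by simp⟩) <| by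
    refine ⟨fun x y h => ?_, fun ⟨e, he⟩ => ?_⟩
    · simpa [Prod.ext_iff] using h
    · rw [edgeSet_completeBipartiteGraph] at he
      obtain ⟨x, rfl⟩ := he
      exact ⟨x, rfl⟩

@[simp]
theorem coe_edgeSetCompleteBipartiteGraphEquiv (x : α × β) :
    (edgeSetCompleteBipartiteGraphEquiv x : Sym2 (α ⊕ β)) = s(.inl x.1, .inr x.2) :=
  rfl

noncomputable def lineGraphCompleteBipartiteGraphIso :
    (completeBipartiteGraph α β).lineGraph ≃g (⊤ : SimpleGraph α) □ (⊤ : SimpleGraph β) :=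
  RelIso.symm
    { toEquiv := edgeSetCompleteBipartiteGraphEquiv
      map_rel_iff' := by
        rintro ⟨a, b⟩ ⟨a', b'⟩
        simp [lineGraph_adj_iff_exists, edgeSetCompleteBipartiteGraphEquiv.injective.ne_iff]
        tauto }

end CompleteBipartite

end SimpleGraph

section ZeroDivisorGraph

theorem RingEquiv.ne_zero_and_exists_mul_eq_zero_iff {R S : Type*} [NonUnitalNonAssocSemiring R]
    [NonUnitalNonAssocSemiring S] (f : R ≃+* S) {x : R} :
    (f x ≠ 0 ∧ ∃ y, y ≠ 0 ∧ f x * y = 0) ↔ (x ≠ 0 ∧ ∃ y, y ≠ 0 ∧ x * y = 0) := by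
  simp [f.surjective.exists, ← map_mul]

variable {n : ℕ} {K L : Type*} [Ring K] [NoZeroDivisors K] [Nontrivial K]
  [Ring L] [NoZeroDivisors L] [Nontrivial L]

theorem Prod.ne_zero_and_exists_mul_eq_zero_iff {x : K × L} :
    (x ≠ 0 ∧ ∃ y, y ≠ 0 ∧ x * y = 0) ↔ (x.1 ≠ 0 ∧ x.2 = 0) ∨ (x.1 = 0 ∧ x.2 ≠ 0) := by
  obtain ⟨a, b⟩ := x
  constructor
  · rintro ⟨hx, ⟨c, d⟩, hy, hxy⟩
    simp only [ne_eq, Prod.mk_mul_mk, Prod.mk_eq_zero, mul_eq_zero] at hx hy hxy ⊢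
    tauto
  · rintro (⟨ha, rfl⟩ | ⟨rfl, hb⟩)
    · exact ⟨by simp [ha], (0, 1), by simp, by simp⟩
    · exact ⟨by simp [hb], (1, 0), by simp, by simp⟩

def zdGraphVertexOfSum (e : ZMod n ≃+* K × L) :
    {a : K // a ≠ 0} ⊕ {b : L // b ≠ 0} → {x : ZMod n // x ≠ 0 ∧ ∃ y, y ≠ 0 ∧ x * y = 0}
  | .inl a => ⟨e.symm (a, 0), by
      rw [← e.ne_zero_and_exists_mul_eq_zero_iff, Prod.ne_zero_and_exists_mul_eq_zero_iff]
      simp [a.2]⟩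
  | .inr b => ⟨e.symm (0, b), by
      rw [← e.ne_zero_and_exists_mul_eq_zero_iff, Prod.ne_zero_and_exists_mul_eq_zero_iff]
      simp [b.2]⟩

theorem zdGraphVertexOfSum_bijective (e : ZMod n ≃+* K × L) :
    Function.Bijective (zdGraphVertexOfSum e) := by
  refine ⟨?_, fun ⟨x, hx⟩ => ?_⟩
  · rintro (⟨a, ha⟩ | ⟨b, hb⟩) (⟨a', ha'⟩ | ⟨b', hb'⟩) h <;>
      simp_all [zdGraphVertexOfSum, Subtype.ext_iff]
  · rw [← e.ne_zero_and_exists_mul_eq_zero_iff, Prod.ne_zero_and_exists_mul_eq_zero_iff] at hx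
    rcases hx with ⟨ha, hb⟩ | ⟨ha, hb⟩
    · exact ⟨.inl ⟨_, ha⟩, Subtype.ext <| e.symm_apply_eq.mpr <| Prod.ext rfl hb.symm⟩
    · exact ⟨.inr ⟨_, hb⟩, Subtype.ext <| e.symm_apply_eq.mpr <| Prod.ext ha.symm rfl⟩

noncomputable def zdGraphIsoCompleteBipartiteGraph (e : ZMod n ≃+* K × L) :
    zdGraph n ≃g completeBipartiteGraph {a : K // a ≠ 0} {b : L // b ≠ 0} :=
  RelIso.symm
    { toEquiv := Equiv.ofBijective _ (zdGraphVertexOfSum_bijective e)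
      map_rel_iff' := by
        rintro (⟨a, ha⟩ | ⟨b, hb⟩) (⟨a', ha'⟩ | ⟨b', hb'⟩) <;>
          simp_all [zdGraph, zdGraphVertexOfSum, ← map_mul] }

end ZeroDivisorGraph

open scoped Classical in
theorem energy_lineGraph_zdGraph_mul_primes
    (p q : ℕ) (hp : p.Prime) (hq : q.Prime) (h2p : 2 < p) (hpq : p < q)
    [NeZero (p * q)] :
    energy (zdGraph (p * q)).lineGraph = 4 * (p : ℝ) * q - 8 * p - 8 * q + 16 := by
  have : Fact p.Prime := ⟨hp⟩
  have : Fact q.Prime := ⟨hq⟩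
  have hcard (r : ℕ) [NeZero r] : Fintype.card {a : ZMod r // a ≠ 0} = r - 1 := by simp
  let crt := ZMod.chineseRemainder ((Nat.coprime_primes hp hq).mpr hpq.ne)
  rw [Iso.energy_eq ((zdGraphIsoCompleteBipartiteGraph crt).lineGraph.trans
      lineGraphCompleteBipartiteGraphIso),
    energy_top_boxProd_top (by rw [hcard]; omega) (by rw [hcard]; omega), hcard, hcard,
    Nat.cast_sub hp.one_le, Nat.cast_sub hq.one_le]
  push_cast
  ring
end

section
/- For a prime q > 3, the Wiener index of the line graph of the zero-divisor graph of Z_{3q} equals (q-1)(3q-5). -/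
open Polynomial SimpleGraph

/-!
By the Chinese remainder theorem `ZMod (p * q) ≃+* ZMod p × ZMod q` for distinct primes `p, q`,
and a nonzero zero-divisor of a product of two domains has exactly one nonzero coordinate; two
such elements multiply to zero iff their nonzero coordinates lie on different sides. So the
zero-divisor graph of `ZMod (p * q)` is the complete bipartite graph `K_{p-1,q-1}`, whose line
graph is the rook's graph `K_{p-1} □ K_{q-1}`. Distances in a box product add up, so the sum of
all distances is a count of ordered pairs differing in one or both coordinates.
-/

namespace SimpleGraph

variable {V W : Type*} {G : SimpleGraph V} {H : SimpleGraph W}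

lemma Hom.edist_le (f : G →g H) (u v : V) : H.edist (f u) (f v) ≤ G.edist u v := by
  by_cases h : G.edist u v = ⊤
  · simp [h]
  obtain ⟨w, hw⟩ := exists_walk_of_edist_ne_top h
  rw [← hw, ← Walk.length_map f]
  exact SimpleGraph.edist_le _

lemma Iso.edist_eq (f : G ≃g H) (u v : V) : H.edist (f u) (f v) = G.edist u v :=
  le_antisymm (f.toHom.edist_le u v) (by simpa using f.symm.toHom.edist_le (f u) (f v))

lemma Iso.dist_eq (f : G ≃g H) (u v : V) : H.dist (f u) (f v) = G.dist u v := by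
  simp only [dist, f.edist_eq]

lemma dist_boxProd {x y : V × W} (h₁ : G.Reachable x.1 y.1) (h₂ : H.Reachable x.2 y.2) :
    (G □ H).dist x y = G.dist x.1 y.1 + H.dist x.2 y.2 := by
  have h := (reachable_boxProd.2 ⟨h₁, h₂⟩).coe_dist_eq_edist
  rw [edist_boxProd, ← h₁.coe_dist_eq_edist, ← h₂.coe_dist_eq_edist] at h
  exact_mod_cast h

lemma sum_dist_top [Fintype V] [DecidableEq V] :
    ∑ u, ∑ v, (⊤ : SimpleGraph V).dist u v = Fintype.card V * (Fintype.card V - 1) := by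
  rw [← Fintype.sum_prod_type']
  have hoff : Finset.univ.filter (fun s : V × V => ¬s.1 = s.2) = Finset.univ.offDiag := by
    ext; simp
  rw [Nat.mul_sub_one, ← Finset.card_univ, ← Finset.offDiag_card, ← hoff, Finset.card_filter]
  simp only [dist_top, ite_not]

def prodToEdgeSetCompleteBipartiteGraph (p : V × W) : (completeBipartiteGraph V W).edgeSet :=
  ⟨s(.inl p.1, .inr p.2), by simp⟩

lemma prodToEdgeSetCompleteBipartiteGraph_bijective :
    (prodToEdgeSetCompleteBipartiteGraph (V := V) (W := W)).Bijective := by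
  constructor
  · rintro ⟨v, w⟩ ⟨v', w'⟩ h
    simpa [prodToEdgeSetCompleteBipartiteGraph, Subtype.ext_iff] using h
  · rintro ⟨e, he⟩
    induction e using Sym2.ind with
    | _ x y =>
      rcases x with v | w <;> rcases y with v' | w'
      · simp at he
      · exact ⟨(v, w'), rfl⟩
      · exact ⟨(v', w), Subtype.ext Sym2.eq_swap⟩
      · simp at he

noncomputable def boxProdTopIsoLineGraphCompleteBipartiteGraph :
    (⊤ : SimpleGraph V).boxProd (⊤ : SimpleGraph W) ≃g (completeBipartiteGraph V W).lineGraph where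
  toEquiv := .ofBijective _ prodToEdgeSetCompleteBipartiteGraph_bijective
  map_rel_iff' {p p'} := by
    obtain ⟨v, w⟩ := p
    obtain ⟨v', w'⟩ := p'
    by_cases hv : v = v' <;> by_cases hw : w = w' <;>
      simp [lineGraph_adj_iff_exists, prodToEdgeSetCompleteBipartiteGraph, hv, hw]

end SimpleGraph

lemma wienerIndex_congr {V W : Type*} {G : SimpleGraph V} {H : SimpleGraph W} (f : G ≃g H) :
    wienerIndex G = wienerIndex H := by
  unfold wienerIndex
  rw [← finsum_comp_equiv (f.toEquiv.prodCongr f.toEquiv)]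
  simp [f.dist_eq]

lemma wienerIndex_boxProd_top {V W : Type*} [Fintype V] [Fintype W] [DecidableEq V]
    [DecidableEq W] :
    wienerIndex ((⊤ : SimpleGraph V).boxProd (⊤ : SimpleGraph W)) =
      (Fintype.card W ^ 2 * (Fintype.card V * (Fintype.card V - 1)) +
        Fintype.card V ^ 2 * (Fintype.card W * (Fintype.card W - 1))) / 2 := by
  unfold wienerIndex
  rw [finsum_eq_sum_of_fintype, ← Fintype.sum_equiv (Equiv.prodProdProdComm V W V W).symm
    (fun s => (⊤ : SimpleGraph V).dist s.1.1 s.1.2 + (⊤ : SimpleGraph W).dist s.2.1 s.2.2)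
    _ fun _ => by rw [dist_boxProd reachable_top reachable_top]; rfl]
  simp only [Fintype.sum_prod_type, Finset.sum_add_distrib, Finset.sum_const, Finset.card_univ,
    smul_eq_mul, ← Finset.mul_sum, sum_dist_top, Fintype.card_prod]
  rw [sq, sq]

def zeroDivisorGraph (R : Type*) [CommMonoidWithZero R] :
    SimpleGraph {x : R // x ≠ 0 ∧ ∃ y : R, y ≠ 0 ∧ x * y = 0} where
  Adj a b := a ≠ b ∧ (a : R) * b = 0
  symm := ⟨fun _ _ h => ⟨h.1.symm, by rw [mul_comm]; exact h.2⟩⟩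
  loopless := ⟨fun _ h => h.1 rfl⟩

lemma zdGraph_eq_zeroDivisorGraph (n : ℕ) : zdGraph n = zeroDivisorGraph (ZMod n) := rfl

section ZeroDivisorGraph

variable {R S : Type*} [CommMonoidWithZero R] [CommMonoidWithZero S]

def zeroDivisorGraphCongr (e : R ≃* S) :
    zeroDivisorGraph R ≃g zeroDivisorGraph S where
  toEquiv := e.toEquiv.subtypeEquiv fun x => by simp [e.surjective.exists, ← map_mul]
  map_rel_iff' {a b} := by simp [zeroDivisorGraph, ← map_mul, Subtype.ext_iff]

variable [NoZeroDivisors R] [NoZeroDivisors S]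

lemma Prod.fst_eq_zero_or_snd_eq_zero_of_mul_eq_zero {x y : R × S} (hy : y ≠ 0)
    (hxy : x * y = 0) : x.1 = 0 ∨ x.2 = 0 := by
  obtain ⟨a, b⟩ := x
  obtain ⟨c, d⟩ := y
  simp only [Prod.mk_mul_mk, Prod.mk_eq_zero, mul_eq_zero, ne_eq] at hxy hy ⊢
  tauto

variable [Nontrivial R] [Nontrivial S]

def sumToZeroDivisorsProd :
    {a : R // a ≠ 0} ⊕ {b : S // b ≠ 0} → {x : R × S // x ≠ 0 ∧ ∃ y, y ≠ 0 ∧ x * y = 0}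
  | .inl a => ⟨(a, 0), by simp [a.2], (0, 1), by simp, by simp⟩
  | .inr b => ⟨(0, b), by simp [b.2], (1, 0), by simp, by simp⟩

lemma sumToZeroDivisorsProd_bijective :
    (sumToZeroDivisorsProd (R := R) (S := S)).Bijective := by
  constructor
  · rintro (⟨a, ha⟩ | ⟨b, hb⟩) (⟨a', ha'⟩ | ⟨b', hb'⟩) h <;>
      simp_all [sumToZeroDivisorsProd, Subtype.ext_iff]
  · rintro ⟨⟨a, b⟩, hx, y, hy, hxy⟩
    rcases Prod.fst_eq_zero_or_snd_eq_zero_of_mul_eq_zero hy hxy with rfl | rfl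
    · exact ⟨.inr ⟨b, by simpa using hx⟩, rfl⟩
    · exact ⟨.inl ⟨a, by simpa using hx⟩, rfl⟩

noncomputable def completeBipartiteGraphIsoZeroDivisorGraphProd :
    completeBipartiteGraph {a : R // a ≠ 0} {b : S // b ≠ 0} ≃g zeroDivisorGraph (R × S) where
  toEquiv := .ofBijective _ sumToZeroDivisorsProd_bijective
  map_rel_iff' {u v} := by
    rcases u with ⟨a, ha⟩ | ⟨b, hb⟩ <;> rcases v with ⟨a', ha'⟩ | ⟨b', hb'⟩ <;>
      simp [zeroDivisorGraph, sumToZeroDivisorsProd, *]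

end ZeroDivisorGraph

lemma ZMod.card_subtype_ne_zero (n : ℕ) [NeZero n] :
    Fintype.card {a : ZMod n // a ≠ 0} = n - 1 := by
  rw [Fintype.card_subtype_compl, Fintype.card_subtype_eq, ZMod.card]

theorem wienerIndex_lineGraph_zdGraph_mul {p q : ℕ} (hp : p.Prime) (hq : q.Prime) (hpq : p ≠ q) :
    wienerIndex (zdGraph (p * q)).lineGraph =
      ((q - 1) ^ 2 * ((p - 1) * (p - 1 - 1)) + (p - 1) ^ 2 * ((q - 1) * (q - 1 - 1))) / 2 := by
  have := Fact.mk hp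
  have := Fact.mk hq
  rw [zdGraph_eq_zeroDivisorGraph]
  let crt := (ZMod.chineseRemainder ((Nat.coprime_primes hp hq).2 hpq)).toMulEquiv
  let e : completeBipartiteGraph {a : ZMod p // a ≠ 0} {b : ZMod q // b ≠ 0} ≃g
      zeroDivisorGraph (ZMod (p * q)) :=
    completeBipartiteGraphIsoZeroDivisorGraphProd.trans (zeroDivisorGraphCongr crt).symm
  rw [← wienerIndex_congr (boxProdTopIsoLineGraphCompleteBipartiteGraph.trans e.lineGraph),
    wienerIndex_boxProd_top, ZMod.card_subtype_ne_zero, ZMod.card_subtype_ne_zero]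

theorem wiener_lineGraph_zdGraph_three_mul_prime
    (q : ℕ) (hq : q.Prime) (hq3 : 3 < q) :
    wienerIndex (zdGraph (3 * q)).lineGraph = (q - 1) * (3 * q - 5) := by
  rw [wienerIndex_lineGraph_zdGraph_mul Nat.prime_three hq (by omega)]
  refine Nat.div_eq_of_eq_mul_left two_pos ?_
  obtain ⟨k, rfl⟩ : ∃ k, q = k + 4 := ⟨q - 4, by omega⟩
  norm_num [show 3 * (k + 4) - 5 = 3 * k + 7 by omega]
  ring
end

section
/- For distinct primes p < q and also for n = p^2 with p prime (p ≥ 5), the line graph of the zero-divisor graph of Z_n is an integral graph: every eigenvalue of its adjacency matrix is an integer. -/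
/-!
Let `B` be the vertex–edge incidence matrix of `G`. Then `Bᵀ B = A(L(G)) + 2` and
`B Bᵀ = D + A(G)` is the signless Laplacian `Q` of `G`; as `Bᵀ B` and `B Bᵀ` have the same
nonzero eigenvalues, every eigenvalue of the line graph `L(G)` is `-2` or `μ - 2` for an
eigenvalue `μ` of `Q`. The zero-divisor graph of `ℤ/p²` is complete, and on `K_m` the
eigenvector equation reads `μ vᵤ = (m - 2) vᵤ + ∑ v`, so `μ ∈ {m - 2, 2m - 2}`. The
zero-divisor graph of `ℤ/pq` is complete bipartite between the nonzero multiples of `p` and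
those of `q`; summing the eigenvector equation over each side shows `μ ∈ {0, a, b, a + b}`,
where `a` and `b` are the sizes of the sides.
-/

open Polynomial SimpleGraph

open Finset Matrix

namespace Matrix

variable {R m n : Type*} [Fintype m] [Fintype n] [DecidableEq m] [DecidableEq n]

theorem eq_zero_or_isRoot_charpoly_mul_comm [CommRing R] [IsDomain R] (A : Matrix m n R)
    (B : Matrix n m R) {x : R} (hx : (A * B).charpoly.IsRoot x) :
    x = 0 ∨ (B * A).charpoly.IsRoot x := by
  have h := congrArg (eval x) (charpoly_mul_comm' A B)
  simp only [eval_mul, eval_pow, eval_X, hx.eq_zero, mul_zero, zero_eq_mul] at h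
  exact h.imp_left (pow_eq_zero_iff'.mp · |>.1)

theorem exists_mulVec_eq_smul_of_isRoot_charpoly [CommRing R] [IsDomain R] {M : Matrix n n R}
    {x : R} (hx : M.charpoly.IsRoot x) : ∃ v ≠ 0, M *ᵥ v = x • v := by
  obtain ⟨v, hv, hMv⟩ :=
    exists_mulVec_eq_zero_iff.mpr ((eval_charpoly M x).symm.trans hx.eq_zero)
  refine ⟨v, hv, ?_⟩
  rw [sub_mulVec, sub_eq_zero] at hMv
  ext i
  simp [← hMv, mulVec_diagonal]

end Matrix

theorem eq_zero_or_eq_add_of_mul_eq_add {K : Type*} [Field K] {μ a b x y : K}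
    (hx : μ * x = b * x + a * y) (hy : μ * y = a * y + b * x) (hxy : x ≠ 0 ∨ y ≠ 0) :
    μ = 0 ∨ μ = a + b := by
  have hroot : μ * (μ - (a + b)) = 0 := by
    by_contra hne
    refine hxy.elim (fun h => h ?_) (fun h => h ?_) <;>
      refine (mul_eq_zero.mp ?_).resolve_left hne
    · linear_combination (μ - a) * hx + a * hy
    · linear_combination (μ - b) * hy + b * hx
  exact (mul_eq_zero.mp hroot).imp_right sub_eq_zero.mp

namespace SimpleGraph

def HasIntegralSpectrum {V : Type*} [Fintype V] [DecidableEq V] (G : SimpleGraph V)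
    [DecidableRel G.Adj] : Prop :=
  ∀ x ∈ (G.adjMatrix ℝ).charpoly.roots, ∃ k : ℤ, x = k

section Incidence

variable {V : Type*} [Fintype V] [DecidableEq V] (G : SimpleGraph V) [DecidableRel G.Adj]

def signlessLapMatrix (R : Type*) [AddMonoidWithOne R] : Matrix V V R :=
  G.degMatrix R + G.adjMatrix R

theorem signlessLapMatrix_mulVec_apply {R : Type*} [NonAssocSemiring R] (v : V) (vec : V → R) :
    (G.signlessLapMatrix R *ᵥ vec) v = ∑ u ∈ G.neighborFinset v, (vec v + vec u) := by
  rw [signlessLapMatrix, add_mulVec, Pi.add_apply, degMatrix_mulVec_apply, adjMatrix_mulVec_apply,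
    sum_add_distrib, sum_const, card_neighborFinset_eq_degree, nsmul_eq_mul]

def edgeIncMatrix (R : Type*) [Zero R] [One R] : Matrix V G.edgeSet R :=
  (G.incMatrix R).submatrix id (↑)

variable {R : Type*} [Fintype G.edgeSet]

theorem edgeIncMatrix_mul_transpose [Semiring R] :
    G.edgeIncMatrix R * (G.edgeIncMatrix R)ᵀ = G.signlessLapMatrix R := by
  have : G.edgeIncMatrix R * (G.edgeIncMatrix R)ᵀ = G.incMatrix R * (G.incMatrix R)ᵀ := by
    ext v w
    simp only [edgeIncMatrix, mul_apply, transpose_apply, submatrix_apply, id]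
    rw [← sum_subtype G.edgeFinset (by simp) fun e => G.incMatrix R v e * G.incMatrix R w e,
      sum_subset (subset_univ _)]
    intro e _ he
    rw [G.incMatrix_of_notMem_incidenceSet fun h => he (by simpa using h.1), zero_mul]
  rw [this, incMatrix_mul_transpose]
  ext v w
  by_cases h : v = w
  · subst h; simp [signlessLapMatrix, degMatrix]
  · simp [signlessLapMatrix, degMatrix, h]

theorem transpose_edgeIncMatrix_mul [Semiring R] [DecidableEq G.edgeSet]
    [DecidableRel G.lineGraph.Adj] :
    (G.edgeIncMatrix R)ᵀ * G.edgeIncMatrix R = G.lineGraph.adjMatrix R + scalar _ 2 := by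
  ext e f
  rw [Matrix.add_apply, adjMatrix_apply, scalar_apply, diagonal_apply]
  obtain rfl | hef := eq_or_ne e f
  · have := G.incMatrix_transpose_mul_diag (R := R) (e := e)
    simp_all [edgeIncMatrix, mul_apply]
  simp only [edgeIncMatrix, mul_apply, transpose_apply, submatrix_apply, id, incMatrix_apply',
    mul_ite, mul_one, mul_zero, ← ite_and, sum_boole, hef, if_false, add_zero]
  split_ifs with hadj
  · obtain ⟨-, w, hwe, hwf⟩ := lineGraph_adj_iff_exists.mp hadj
    rw [← Nat.cast_one,
      card_eq_one.mpr ⟨w, eq_singleton_iff_unique_mem.mpr ⟨?_, fun v hv => ?_⟩⟩]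
    · simp [incidenceSet, hwe, hwf]
    obtain ⟨-, ⟨-, hvf⟩, -, hve⟩ := mem_filter.mp hv
    by_contra hvw
    exact hef (Subtype.ext (Sym2.eq_of_ne_mem hvw hve hwe hvf hwf))
  · rw [← Nat.cast_zero, card_eq_zero.mpr (filter_eq_empty_iff.mpr ?_)]
    rintro v - ⟨⟨-, hvf⟩, -, hve⟩
    exact hadj (lineGraph_adj_iff_exists.mpr ⟨hef, v, hve, hvf⟩)

theorem isRoot_charpoly_signlessLapMatrix_of_isRoot_lineGraph {K : Type*} [CommRing K]
    [IsDomain K] [DecidableEq G.edgeSet] [DecidableRel G.lineGraph.Adj] {x : K}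
    (hx : (G.lineGraph.adjMatrix K).charpoly.IsRoot x) :
    x = -2 ∨ (G.signlessLapMatrix K).charpoly.IsRoot (x + 2) := by
  have hA :
      G.lineGraph.adjMatrix K = (G.edgeIncMatrix K)ᵀ * G.edgeIncMatrix K - scalar _ 2 := by
    rw [transpose_edgeIncMatrix_mul, add_sub_cancel_right]
  rw [hA, charpoly_sub_scalar, IsRoot, eval_comp, eval_add, eval_X, eval_C] at hx
  rw [← edgeIncMatrix_mul_transpose]
  exact (eq_zero_or_isRoot_charpoly_mul_comm _ _ hx).imp_left eq_neg_of_add_eq_zero_left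

theorem hasIntegralSpectrum_lineGraph_of_signlessLapMatrix [DecidableEq G.edgeSet]
    [DecidableRel G.lineGraph.Adj]
    (h : ∀ μ : ℝ, (G.signlessLapMatrix ℝ).charpoly.IsRoot μ → ∃ k : ℤ, μ = k) :
    G.lineGraph.HasIntegralSpectrum := fun x hx => by
  rcases isRoot_charpoly_signlessLapMatrix_of_isRoot_lineGraph G (isRoot_of_mem_roots hx)
    with rfl | hμ
  · exact ⟨-2, by norm_num⟩
  · obtain ⟨k, hk⟩ := h _ hμ
    exact ⟨k - 2, by push_cast; linarith⟩

end Incidence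

section Spectrum

variable {V K : Type*} [Fintype V] [DecidableEq V] [Field K]

theorem isRoot_charpoly_signlessLapMatrix_top {μ : K}
    (hμ : ((⊤ : SimpleGraph V).signlessLapMatrix K).charpoly.IsRoot μ) :
    μ = Fintype.card V - 2 ∨ μ = 2 * Fintype.card V - 2 := by
  obtain ⟨v, hv, hQv⟩ := exists_mulVec_eq_smul_of_isRoot_charpoly hμ
  have hvert : ∀ u, μ * v u = (Fintype.card V - 2) * v u + ∑ w, v w := fun u => by
    have := congrFun hQv u
    rw [signlessLapMatrix_mulVec_apply, neighborFinset_top, Pi.smul_apply, smul_eq_mul] at this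
    have hsplit := Fintype.sum_eq_add_sum_compl u fun w => v u + v w
    rw [sum_add_distrib, sum_const, card_univ, nsmul_eq_mul] at hsplit
    linear_combination -this - hsplit
  have hsum : μ * ∑ w, v w = (2 * Fintype.card V - 2) * ∑ w, v w := by
    rw [mul_sum, sum_congr rfl fun u _ => hvert u, sum_add_distrib, ← mul_sum, sum_const,
      card_univ, nsmul_eq_mul]
    ring
  by_cases hσ : ∑ w, v w = 0
  · obtain ⟨u, hu⟩ := Function.ne_iff.mp hv
    have := hvert u
    rw [hσ, add_zero] at this
    exact Or.inl (mul_right_cancel₀ hu this)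
  · exact Or.inr (mul_right_cancel₀ hσ hsum)

theorem isRoot_charpoly_signlessLapMatrix_of_adj_iff (G : SimpleGraph V) [DecidableRel G.Adj]
    (s : V → Prop) [DecidablePred s] (hG : ∀ u w, G.Adj u w ↔ (s u ↔ ¬ s w)) {μ : K}
    (hμ : (G.signlessLapMatrix K).charpoly.IsRoot μ) :
    μ = 0 ∨ μ = (#{u | s u} : K) ∨ μ = (#{u | ¬ s u} : K) ∨
      μ = (#{u | s u} : K) + (#{u | ¬ s u} : K) := by
  obtain ⟨v, hv, hQv⟩ := exists_mulVec_eq_smul_of_isRoot_charpoly hμ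
  set a : K := (#{u | s u} : K)
  set b : K := (#{u | ¬ s u} : K)
  set σS := ∑ w with s w, v w
  set σT := ∑ w with ¬ s w, v w
  have heq : ∀ u, μ * v u = ∑ w ∈ G.neighborFinset u, (v u + v w) := fun u => by
    rw [← signlessLapMatrix_mulVec_apply, hQv, Pi.smul_apply, smul_eq_mul]
  have hS : ∀ u, s u → μ * v u = b * v u + σT := fun u hu => by
    rw [heq, show G.neighborFinset u = ({w | ¬ s w} : Finset V) by ext w; simp [hG, hu],
      sum_add_distrib, sum_const, nsmul_eq_mul]
  have hT : ∀ u, ¬ s u → μ * v u = a * v u + σS := fun u hu => by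
    rw [heq, show G.neighborFinset u = ({w | s w} : Finset V) by ext w; simp [hG, hu],
      sum_add_distrib, sum_const, nsmul_eq_mul]
  have hσS : μ * σS = b * σS + a * σT := by
    rw [mul_sum, sum_congr rfl fun u hu => hS u (mem_filter.mp hu).2, sum_add_distrib, ← mul_sum,
      sum_const, nsmul_eq_mul]
  have hσT : μ * σT = a * σT + b * σS := by
    rw [mul_sum, sum_congr rfl fun u hu => hT u (mem_filter.mp hu).2, sum_add_distrib, ← mul_sum,
      sum_const, nsmul_eq_mul]
  by_cases h0 : σS = 0 ∧ σT = 0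
  · obtain ⟨u, hu⟩ := Function.ne_iff.mp hv
    by_cases hsu : s u
    · have := hS u hsu
      rw [h0.2, add_zero] at this
      exact Or.inr (Or.inr (Or.inl (mul_right_cancel₀ hu this)))
    · have := hT u hsu
      rw [h0.1, add_zero] at this
      exact Or.inr (Or.inl (mul_right_cancel₀ hu this))
  · rw [not_and_or] at h0
    exact (eq_zero_or_eq_add_of_mul_eq_add hσS hσT h0).imp_right fun h => Or.inr (Or.inr h)

end Spectrum

section LineGraph

variable {V : Type*} [Fintype V] [DecidableEq V] (G : SimpleGraph V) [Fintype G.edgeSet]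
  [DecidableEq G.edgeSet] [DecidableRel G.lineGraph.Adj]

theorem hasIntegralSpectrum_lineGraph_of_eq_top (hG : G = ⊤) :
    G.lineGraph.HasIntegralSpectrum := by
  subst hG
  refine hasIntegralSpectrum_lineGraph_of_signlessLapMatrix _ fun μ hμ => ?_
  rcases isRoot_charpoly_signlessLapMatrix_top hμ with rfl | rfl
  exacts [⟨Fintype.card V - 2, by push_cast; ring⟩,
    ⟨2 * Fintype.card V - 2, by push_cast; ring⟩]

theorem hasIntegralSpectrum_lineGraph_of_adj_iff (s : V → Prop)
    (hG : ∀ u w, G.Adj u w ↔ (s u ↔ ¬ s w)) : G.lineGraph.HasIntegralSpectrum := by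
  classical
  refine hasIntegralSpectrum_lineGraph_of_signlessLapMatrix _ fun μ hμ => ?_
  rcases isRoot_charpoly_signlessLapMatrix_of_adj_iff G s hG hμ with rfl | rfl | rfl | rfl
  exacts [⟨0, by simp⟩, ⟨#{u | s u}, by simp⟩, ⟨#{u | ¬ s u}, by simp⟩,
    ⟨#{u | s u} + #{u | ¬ s u}, by simp⟩]

end LineGraph

end SimpleGraph

namespace ZMod

variable {n : ℕ} [NeZero n]

theorem eq_zero_iff_dvd_val (x : ZMod n) : x = 0 ↔ n ∣ x.val := by
  rw [← natCast_eq_zero_iff, natCast_zmod_val]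

theorem mul_eq_zero_iff_dvd_val_mul_val (x y : ZMod n) : x * y = 0 ↔ n ∣ x.val * y.val := by
  rw [← natCast_eq_zero_iff, Nat.cast_mul, natCast_zmod_val, natCast_zmod_val]

end ZMod

theorem zdGraph_sq_eq_top {p : ℕ} (hp : p.Prime) [NeZero (p ^ 2)] : zdGraph (p ^ 2) = ⊤ := by
  have hdvd (x y : ZMod (p ^ 2)) (hy : y ≠ 0) (hxy : x * y = 0) : p ∣ x.val := by
    by_contra hpx
    rw [ZMod.mul_eq_zero_iff_dvd_val_mul_val] at hxy
    exact hy ((ZMod.eq_zero_iff_dvd_val y).mpr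
      ((((hp.coprime_iff_not_dvd).mpr hpx).pow_left 2).dvd_of_dvd_mul_left hxy))
  ext u w
  obtain ⟨-, y, hy, huy⟩ := u.2
  obtain ⟨-, z, hz, hwz⟩ := w.2
  refine ⟨fun h => h.1, fun h => ⟨h, ?_⟩⟩
  rw [ZMod.mul_eq_zero_iff_dvd_val_mul_val]
  exact (dvd_of_eq (sq p)).trans (mul_dvd_mul (hdvd _ _ hy huy) (hdvd _ _ hz hwz))

theorem zdGraph_mul_adj_iff {p q : ℕ} (hp : p.Prime) (hq : q.Prime) (hpq : p ≠ q)
    [NeZero (p * q)] (u w) :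
    (zdGraph (p * q)).Adj u w ↔
      (p ∣ (u : ZMod (p * q)).val ↔ ¬ p ∣ (w : ZMod (p * q)).val) := by
  have hcop : p.Coprime q := (Nat.coprime_primes hp hq).mpr hpq
  have hdvd (m : ℕ) : p * q ∣ m ↔ p ∣ m ∧ q ∣ m := by
    rw [← hcop.lcm_eq_mul, Nat.lcm_dvd_iff]
  have hzero (x : ZMod (p * q)) : x = 0 ↔ p ∣ x.val ∧ q ∣ x.val := by
    rw [ZMod.eq_zero_iff_dvd_val, hdvd]
  have hmul (x y : ZMod (p * q)) :
      x * y = 0 ↔ (p ∣ x.val ∨ p ∣ y.val) ∧ (q ∣ x.val ∨ q ∣ y.val) := by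
    rw [ZMod.mul_eq_zero_iff_dvd_val_mul_val, hdvd, hp.dvd_mul, hq.dvd_mul]
  have hvert (x : ZMod (p * q)) (hx : x ≠ 0) (hzd : ∃ y, y ≠ 0 ∧ x * y = 0) :
      p ∣ x.val ↔ ¬ q ∣ x.val := by
    obtain ⟨y, hy, hxy⟩ := hzd
    rw [Ne, hzero] at hx hy
    rw [hmul] at hxy
    tauto
  have hu := hvert _ u.2.1 u.2.2
  have hw := hvert _ w.2.1 w.2.2
  change u ≠ w ∧ _ ↔ _
  rw [hmul]
  refine ⟨by tauto, fun h => ⟨?_, by tauto⟩⟩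
  rintro rfl
  tauto

open scoped Classical in
theorem lineGraph_zdGraph_integral :
    (∀ (p q : ℕ) [NeZero (p * q)], p.Prime → q.Prime → p < q →
      ∀ x ∈ ((zdGraph (p * q)).lineGraph.adjMatrix ℝ).charpoly.roots,
        ∃ k : ℤ, x = (k : ℝ)) ∧
    (∀ (p : ℕ) [NeZero (p ^ 2)], p.Prime → 5 ≤ p →
      ∀ x ∈ ((zdGraph (p ^ 2)).lineGraph.adjMatrix ℝ).charpoly.roots,
        ∃ k : ℤ, x = (k : ℝ)) :=
  ⟨fun _ _ _ hp hq hpq =>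
    hasIntegralSpectrum_lineGraph_of_adj_iff _ _ (zdGraph_mul_adj_iff hp hq hpq.ne),
  fun _ _ hp _ => hasIntegralSpectrum_lineGraph_of_eq_top _ (zdGraph_sq_eq_top hp)⟩
end
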